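/- Let γ ⊂ ℝ^{4,2} be a circle, i.e. a 3-dimensional subspace of {p}^⊥ on which the form has signature (2,1), and let f ⊂ ℝ^{4,2} be a 2-dimensional totally isotropic subspace (a contact element). Then the following are equivalent: (a) f contains a nonzero vector of γ (its point sphere lies on the circle), and every s ∈ f with ⟨s,p⟩ ≠ 0 satisfies ⟨s, c + ⟨c,p⟩p⟩ = 0 for every lightlike c ∈ γ^⊥ (every other sphere of f intersects the circle orthogonally); (b) every s ∈ f and every lightlike c ∈ γ^⊥ satisfy ⟨s, c + ⟨c,p⟩p⟩ = 0. (Lemma: a discrete Legendre map is orthogonal to a circle congruence if and only if relation (b) holds at every vertex.) -/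
import Mathlib


noncomputable section

/-- The vector space ℝ^{4,2}, modeled as `Fin 6 → ℝ`. -/
abbrev R42 : Type := Fin 6 → ℝ

/-- The symmetric bilinear form of signature (4,2) on ℝ^{4,2}. -/
def bform : R42 →ₗ[ℝ] R42 →ₗ[ℝ] ℝ :=
  LinearMap.mk₂ ℝ
    (fun x y => x 0 * y 0 + x 1 * y 1 + x 2 * y 2 + x 3 * y 3 - x 4 * y 4 - x 5 * y 5)
    (fun x x' y => by simp only [Pi.add_apply]; ring)
    (fun c x y => by simp only [Pi.smul_apply, smul_eq_mul]; ring)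
    (fun x y y' => by simp only [Pi.add_apply]; ring)
    (fun c x y => by simp only [Pi.smul_apply, smul_eq_mul]; ring)

/-- A lightlike vector: nonzero and isotropic. Represents an oriented 2-sphere. -/
def IsLightlike (v : R42) : Prop := v ≠ 0 ∧ bform v v = 0

/-- The Lie inversion with respect to the linear sphere complex determined by `a`. -/
def lieInv (a r : R42) : R42 := r - (2 * bform r a / bform a a) • a

/-- A contact element: a 2-dimensional totally isotropic subspace. -/
def IsContactElement (f : Submodule ℝ R42) : Prop :=
  Module.finrank ℝ f = 2 ∧ ∀ u ∈ f, ∀ v ∈ f, bform u v = 0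

/-- A circle: a 3-dimensional subspace of `{p}^⊥` on which the form has
signature (2,1), encoded by an orthogonal basis. -/
def IsCircle (p : R42) (γ : Submodule ℝ R42) : Prop :=
  (∀ v ∈ γ, bform v p = 0) ∧
  ∃ u v w : R42, γ = Submodule.span ℝ ({u, v, w} : Set R42) ∧
    bform u u = 1 ∧ bform v v = 1 ∧ bform w w = -1 ∧
    bform u v = 0 ∧ bform u w = 0 ∧ bform v w = 0

lemma bform_apply (x y : R42) : bform x y = x 0 * y 0 + x 1 * y 1 + x 2 * y 2 + x 3 * y 3 - x 4 * y 4 - x 5 * y 5 := rfl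

lemma bform_comm (x y : R42) : bform x y = bform y x := by
  rw [bform_apply, bform_apply]; ring

lemma exists_nontriv (a b c : R42) :
    ∃ α β δ : ℝ, ¬(α = 0 ∧ β = 0 ∧ δ = 0) ∧
      α * a 4 + β * b 4 + δ * c 4 = 0 ∧ α * a 5 + β * b 5 + δ * c 5 = 0 := by
  set M : Matrix (Fin 2) (Fin 3) ℝ := !![a 4, b 4, c 4; a 5, b 5, c 5] with hM
  have hni : ¬ Function.Injective M.mulVecLin := by
    intro hinj
    have := LinearMap.finrank_le_finrank_of_injective hinj
    simp at this
  rw [← LinearMap.ker_eq_bot] at hni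
  obtain ⟨v, hv, hv0⟩ := Submodule.exists_mem_ne_zero_of_ne_bot hni
  refine ⟨v 0, v 1, v 2, ?_, ?_, ?_⟩
  · intro ⟨h0, h1, h2⟩
    apply hv0; funext i; fin_cases i <;> assumption
  · have := congrFun (LinearMap.mem_ker.mp hv) 0
    simpa [M, Matrix.mulVecLin, Matrix.mulVec, dotProduct, Fin.sum_univ_three, mul_comm] using this
  · have := congrFun (LinearMap.mem_ker.mp hv) 1
    simpa [M, Matrix.mulVecLin, Matrix.mulVec, dotProduct, Fin.sum_univ_three, mul_comm] using this

lemma semidef_dep (a b c : R42)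
    (h : ∀ α β δ : ℝ, bform (α • a + β • b + δ • c) (α • a + β • b + δ • c) ≤ 0) :
    ∃ α β δ : ℝ, ¬(α = 0 ∧ β = 0 ∧ δ = 0) ∧ α • a + β • b + δ • c = 0 := by
  obtain ⟨α, β, δ, hnt, h4, h5⟩ := exists_nontriv a b c
  set y : R42 := α • a + β • b + δ • c with hy
  have hyi : ∀ i, y i = α * a i + β * b i + δ * c i := by
    intro i; simp only [hy, Pi.add_apply, Pi.smul_apply, smul_eq_mul]
  have hy4 : y 4 = 0 := by rw [hyi]; exact h4
  have hy5 : y 5 = 0 := by rw [hyi]; exact h5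
  have hle := h α β δ
  rw [← hy, bform_apply, hy4, hy5] at hle
  have h0 : y 0 = 0 := by nlinarith [sq_nonneg (y 0), sq_nonneg (y 1), sq_nonneg (y 2), sq_nonneg (y 3)]
  have h1 : y 1 = 0 := by nlinarith [sq_nonneg (y 0), sq_nonneg (y 1), sq_nonneg (y 2), sq_nonneg (y 3)]
  have h2 : y 2 = 0 := by nlinarith [sq_nonneg (y 0), sq_nonneg (y 1), sq_nonneg (y 2), sq_nonneg (y 3)]
  have h3 : y 3 = 0 := by nlinarith [sq_nonneg (y 0), sq_nonneg (y 1), sq_nonneg (y 2), sq_nonneg (y 3)]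
  refine ⟨α, β, δ, hnt, ?_⟩
  rw [← hy]
  funext i
  have : y i = 0 := by fin_cases i <;> first | exact h0 | exact h1 | exact h2 | exact h3 | exact hy4 | exact hy5
  simpa using this

lemma bform_expand (a b c : R42) (α β δ : ℝ) :
    bform (α • a + β • b + δ • c) (α • a + β • b + δ • c) =
      α^2 * bform a a + β^2 * bform b b + δ^2 * bform c c
      + 2*α*β * bform a b + 2*α*δ * bform a c + 2*β*δ * bform b c := by
  simp only [map_add, map_smul, LinearMap.add_apply, LinearMap.smul_apply, smul_eq_mul,
    bform_comm b a, bform_comm c a, bform_comm c b]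
  ring

lemma posdef_aux (w p x : R42) (hww : bform w w = -1) (hpp : bform p p = -1)
    (hwp : bform w p = 0) (hxw : bform x w = 0) (hxp : bform x p = 0)
    (hxx : bform x x ≤ 0) : x = 0 := by
  obtain ⟨α, β, δ, hnt, hrel⟩ := semidef_dep w p x (by
    intro α β δ
    rw [bform_expand, hww, hpp, hwp, bform_comm w x, hxw, bform_comm p x, hxp]
    nlinarith [sq_nonneg α, sq_nonneg β, sq_nonneg δ])
  have hw := congrArg (fun z => bform z w) hrel
  have hp := congrArg (fun z => bform z p) hrel
  simp only [map_add, map_smul, LinearMap.add_apply, LinearMap.smul_apply, smul_eq_mul,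
    hww, hpp, bform_comm p w, hwp, hxw, hxp, map_zero, LinearMap.zero_apply] at hw hp
  have hα : α = 0 := by linarith [hw]
  have hβ : β = 0 := by linarith [hp]
  subst hα hβ
  have hδ : δ ≠ 0 := by tauto
  have : δ • x = 0 := by simpa using hrel
  rcases smul_eq_zero.mp this with h | h
  · exact absurd h hδ
  · exact h

lemma mem_span_of_perp (u v w p s : R42)
    (huu : bform u u = 1) (hvv : bform v v = 1) (hww : bform w w = -1) (hpp : bform p p = -1)
    (huv : bform u v = 0) (huw : bform u w = 0) (hvw : bform v w = 0)
    (hup : bform u p = 0) (hvp : bform v p = 0) (hwp : bform w p = 0)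
    (H : ∀ c : R42, bform c u = 0 → bform c v = 0 → bform c w = 0 → bform c p = 0 →
      bform s c = 0) :
    s ∈ Submodule.span ℝ ({u, v, w, p} : Set R42) := by
  set s' : R42 := s - bform s u • u - bform s v • v + bform s w • w + bform s p • p with hs'
  have e1 : bform s' u = 0 := by
    simp only [hs', map_sub, map_add, map_smul, LinearMap.sub_apply, LinearMap.add_apply,
      LinearMap.smul_apply, smul_eq_mul, huu, bform_comm v u, huv, bform_comm w u, huw,
      bform_comm p u, hup]
    ring
  have e2 : bform s' v = 0 := by
    simp only [hs', map_sub, map_add, map_smul, LinearMap.sub_apply, LinearMap.add_apply,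
      LinearMap.smul_apply, smul_eq_mul, hvv, huv, bform_comm w v, hvw, bform_comm p v, hvp]
    ring
  have e3 : bform s' w = 0 := by
    simp only [hs', map_sub, map_add, map_smul, LinearMap.sub_apply, LinearMap.add_apply,
      LinearMap.smul_apply, smul_eq_mul, hww, huw, hvw, bform_comm p w, hwp]
    ring
  have e4 : bform s' p = 0 := by
    simp only [hs', map_sub, map_add, map_smul, LinearMap.sub_apply, LinearMap.add_apply,
      LinearMap.smul_apply, smul_eq_mul, hpp, hup, hvp, hwp]
    ring
  have hss' : bform s s' = 0 := H s' e1 e2 e3 e4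
  have key : ∀ t : R42, bform s' t = bform s t - bform s u * bform u t - bform s v * bform v t
      + bform s w * bform w t + bform s p * bform p t := by
    intro t
    simp only [hs', map_sub, map_add, map_smul, LinearMap.sub_apply, LinearMap.add_apply,
      LinearMap.smul_apply, smul_eq_mul]
  have hs's' : bform s' s' = 0 := by
    rw [key s', hss', bform_comm u s', bform_comm v s', bform_comm w s', bform_comm p s',
      e1, e2, e3, e4]; ring
  have hz : s' = 0 := posdef_aux w p s' hww hpp hwp e3 e4 (le_of_eq hs's')
  have : s = bform s u • u + bform s v • v - bform s w • w - bform s p • p := by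
    have := hs' ▸ hz
    linear_combination (norm := module) this
  rw [this]
  have hu : u ∈ Submodule.span ℝ ({u, v, w, p} : Set R42) := Submodule.subset_span (by simp)
  have hv : v ∈ Submodule.span ℝ ({u, v, w, p} : Set R42) := Submodule.subset_span (by simp)
  have hw : w ∈ Submodule.span ℝ ({u, v, w, p} : Set R42) := Submodule.subset_span (by simp)
  have hpm : p ∈ Submodule.span ℝ ({u, v, w, p} : Set R42) := Submodule.subset_span (by simp)
  exact Submodule.sub_mem _ (Submodule.sub_mem _ (Submodule.add_mem _
    (Submodule.smul_mem _ _ hu) (Submodule.smul_mem _ _ hv)) (Submodule.smul_mem _ _ hw))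
    (Submodule.smul_mem _ _ hpm)


lemma key_backward (p : R42) (hpp : bform p p = -1) (γ : Submodule ℝ R42)
    (hγ1 : ∀ g ∈ γ, bform g p = 0) (s : R42)
    (hs : s ∈ γ ⊔ Submodule.span ℝ ({p} : Set R42)) (c : R42)
    (hc : ∀ g ∈ γ, bform c g = 0) :
    bform s (c + bform c p • p) = 0 := by
  obtain ⟨g, hg, t, ht, rfl⟩ := Submodule.mem_sup.mp hs
  obtain ⟨r, rfl⟩ := Submodule.mem_span_singleton.mp ht
  have h1 : bform g c = 0 := by rw [bform_comm]; exact hc g hg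
  have h2 : bform g p = 0 := hγ1 g hg
  simp only [map_add, map_smul, LinearMap.add_apply, LinearMap.smul_apply, smul_eq_mul,
    h1, h2, hpp, bform_comm p c]
  ring

lemma key_forward (p u v w : R42) (hpp : bform p p = -1) (γ : Submodule ℝ R42)
    (hγ1 : ∀ g ∈ γ, bform g p = 0)
    (hspan : γ = Submodule.span ℝ ({u, v, w} : Set R42))
    (huu : bform u u = 1) (hvv : bform v v = 1) (hww : bform w w = -1)
    (huv : bform u v = 0) (huw : bform u w = 0) (hvw : bform v w = 0)
    (s : R42)
    (P : ∀ c : R42, IsLightlike c → (∀ g ∈ γ, bform c g = 0) →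
      bform s (c + bform c p • p) = 0) :
    s ∈ Submodule.span ℝ ({u, v, w, p} : Set R42) := by
  have hu : u ∈ γ := hspan ▸ Submodule.subset_span (by simp)
  have hv : v ∈ γ := hspan ▸ Submodule.subset_span (by simp)
  have hw : w ∈ γ := hspan ▸ Submodule.subset_span (by simp)
  have hup : bform u p = 0 := hγ1 u hu
  have hvp : bform v p = 0 := hγ1 v hv
  have hwp : bform w p = 0 := hγ1 w hw
  apply mem_span_of_perp u v w p s huu hvv hww hpp huv huw hvw hup hvp hwp
  intro c hcu hcv hcw hcp
  by_cases hc0 : c = 0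
  · simp [hc0]
  have hcc : 0 ≤ bform c c := by
    by_contra hneg
    exact hc0 (posdef_aux w p c hww hpp hwp hcw hcp (le_of_lt (not_le.mp hneg)))
  set lam : ℝ := Real.sqrt (bform c c) with hlam
  have hlam2 : lam * lam = bform c c := Real.mul_self_sqrt hcc
  set c' : R42 := c + lam • p with hc'
  have hc'p : bform c' p = -lam := by
    simp only [hc', map_add, map_smul, LinearMap.add_apply, LinearMap.smul_apply, smul_eq_mul,
      hcp, hpp]
    ring
  have hc'ne : c' ≠ 0 := by
    intro h0
    have hz : bform c' p = 0 := by rw [h0]; simp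
    rw [hc'p] at hz
    have hlam0 : lam = 0 := by linarith
    apply hc0
    have hcl : c = -(lam • p) := by
      have h0' : c + lam • p = 0 := hc' ▸ h0
      linear_combination (norm := module) h0'
    rw [hcl, hlam0]; simp
  have hc'c' : bform c' c' = 0 := by
    have : bform c' c' = bform c c + 2 * lam * bform c p + lam * lam * bform p p := by
      simp only [hc', map_add, map_smul, LinearMap.add_apply, LinearMap.smul_apply, smul_eq_mul,
        bform_comm p c]
      ring
    rw [this, hcp, hpp, hlam2]; ring
  have hc'γ : ∀ g ∈ γ, bform c' g = 0 := by
    have hbase : ∀ y ∈ ({u, v, w} : Set R42), bform c' y = 0 := by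
      intro y hy
      have e : ∀ z : R42, bform c z = 0 → bform p z = 0 → bform c' z = 0 := by
        intro z h1 h2
        simp only [hc', map_add, map_smul, LinearMap.add_apply, LinearMap.smul_apply,
          smul_eq_mul, h1, h2]
        ring
      rcases hy with rfl | rfl | rfl
      · exact e y hcu (by rw [bform_comm]; exact hup)
      · exact e y hcv (by rw [bform_comm]; exact hvp)
      · exact e y hcw (by rw [bform_comm]; exact hwp)
    intro g hg
    rw [hspan] at hg
    induction hg using Submodule.span_induction with
    | mem x hx => exact hbase x hx
    | zero => simp
    | add x y _ _ hx hy => rw [map_add, hx, hy]; ring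
    | smul t x _ hx => rw [map_smul, hx]; simp
  have hP := P c' ⟨hc'ne, hc'c'⟩ hc'γ
  rw [hc'p] at hP
  have hcc' : c' + (-lam) • p = c := by
    rw [hc']; module
  rwa [hcc'] at hP



lemma no_isotropic_two (p x y : R42) (hpp : bform p p = -1)
    (hxp : bform x p = 0) (hyp : bform y p = 0)
    (hxx : bform x x = 0) (hyy : bform y y = 0) (hxy : bform x y = 0)
    (hx0 : x ≠ 0) (hy : y ∉ Submodule.span ℝ ({x} : Set R42)) : False := by
  obtain ⟨α, β, δ, hnt, hrel⟩ := semidef_dep x y p (by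
    intro α β δ
    rw [bform_expand, hxx, hyy, hxy, hxp, hyp, hpp]
    nlinarith [sq_nonneg δ])
  have hpz := congrArg (fun z => bform z p) hrel
  simp only [map_add, map_smul, LinearMap.add_apply, LinearMap.smul_apply, smul_eq_mul,
    hxp, hyp, hpp, map_zero, LinearMap.zero_apply] at hpz
  have hδ : δ = 0 := by linarith
  subst hδ
  have hrel2 : α • x + β • y = 0 := by simpa using hrel
  by_cases hβ : β = 0
  · subst hβ
    have : α • x = 0 := by simpa using hrel2
    rcases smul_eq_zero.mp this with h | h
    · exact hnt ⟨h, rfl, rfl⟩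
    · exact hx0 h
  · apply hy
    rw [Submodule.mem_span_singleton]
    refine ⟨β⁻¹ * (-α), ?_⟩
    have h1 : β • y = (-α) • x := by
      linear_combination (norm := module) hrel2
    have h2 : y = (β⁻¹ * (-α)) • x := by
      calc y = β⁻¹ • (β • y) := by rw [smul_smul, inv_mul_cancel₀ hβ, one_smul]
        _ = β⁻¹ • ((-α) • x) := by rw [h1]
        _ = (β⁻¹ * (-α)) • x := by rw [smul_smul]
    exact h2.symm


/-- A contact element `f` is orthogonal to a circle `γ` (its point
sphere lies on the circle and every other sphere of `f` intersects the circle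
orthogonally) if and only if `⟨s, c + ⟨c,p⟩p⟩ = 0` for every `s ∈ f` and every
lightlike `c ∈ γ^⊥`. -/
theorem stmt_18 (p : R42) (hp : bform p p = -1)
    (γ f : Submodule ℝ R42) (hγ : IsCircle p γ) (hf : IsContactElement f) :
    ((∃ v ∈ γ, v ≠ 0 ∧ v ∈ f) ∧
      (∀ s ∈ f, bform s p ≠ 0 →
        ∀ c : R42, IsLightlike c → (∀ g ∈ γ, bform c g = 0) →
          bform s (c + bform c p • p) = 0)) ↔
    (∀ s ∈ f, ∀ c : R42, IsLightlike c → (∀ g ∈ γ, bform c g = 0) →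
      bform s (c + bform c p • p) = 0) := by
  obtain ⟨hγ1, u, v, w, hspan, huu, hvv, hww, huv, huw, hvw⟩ := hγ
  have hp0 : p ≠ 0 := by
    intro h
    rw [h] at hp
    simp at hp
  constructor
  · rintro ⟨⟨x, hxγ, hx0, hxf⟩, hA⟩ s hs c hlc hcγ
    by_cases hsp : bform s p = 0
    · by_cases hT : ∀ t ∈ f, bform t p = 0
      · exfalso
        have hnle : ¬ f ≤ Submodule.span ℝ ({x} : Set R42) := by
          intro hle
          have h1 := Submodule.finrank_mono hle
          rw [hf.1, finrank_span_singleton hx0] at h1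
          omega
        obtain ⟨y, hyf, hynot⟩ := SetLike.not_le_iff_exists.mp hnle
        exact no_isotropic_two p x y hp (hγ1 x hxγ) (hT y hyf)
          (hf.2 x hxf x hxf) (hf.2 y hyf y hyf) (hf.2 x hxf y hyf) hx0 hynot
      · push_neg at hT
        obtain ⟨t, htf, htp⟩ := hT
        have h1 := hA t htf htp c hlc hcγ
        have hstp : bform (s + t) p ≠ 0 := by
          rw [map_add, LinearMap.add_apply, hsp, zero_add]
          exact htp
        have h2 := hA (s + t) (Submodule.add_mem f hs htf) hstp c hlc hcγ
        have h3 : bform (s + t) (c + bform c p • p) =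
            bform s (c + bform c p • p) + bform t (c + bform c p • p) := by
          simp only [map_add, LinearMap.add_apply]; ring
        rw [h2, h1] at h3
        linarith
    · exact hA s hs hsp c hlc hcγ
  · intro hb
    refine ⟨?_, fun s hs _ c hlc hcγ => hb s hs c hlc hcγ⟩
    have hSspan : Submodule.span ℝ ({u, v, w, p} : Set R42) =
        γ ⊔ Submodule.span ℝ ({p} : Set R42) := by
      rw [hspan, ← Submodule.span_union]
      congr 1
      ext z
      simp only [Set.mem_insert_iff, Set.mem_union, Set.mem_singleton_iff]
      tauto
    have hfS : f ≤ γ ⊔ Submodule.span ℝ ({p} : Set R42) := by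
      intro s hs
      rw [← hSspan]
      exact key_forward p u v w hp γ hγ1 hspan huu hvv hww huv huw hvw s
        (fun c hlc hcγ => hb s hs c hlc hcγ)
    have hsup : f ⊔ γ ≤ γ ⊔ Submodule.span ℝ ({p} : Set R42) :=
      sup_le hfS le_sup_left
    have h1 : Module.finrank ℝ ↥(f ⊔ γ) ≤ Module.finrank ℝ ↥(γ ⊔ Submodule.span ℝ ({p} : Set R42)) :=
      Submodule.finrank_mono hsup
    have h2 : Module.finrank ℝ ↥(γ ⊔ Submodule.span ℝ ({p} : Set R42)) +
        Module.finrank ℝ ↥(γ ⊓ Submodule.span ℝ ({p} : Set R42)) =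
        Module.finrank ℝ ↥γ + Module.finrank ℝ ↥(Submodule.span ℝ ({p} : Set R42)) :=
      Submodule.finrank_sup_add_finrank_inf_eq γ _
    have h3 : Module.finrank ℝ ↥(f ⊔ γ) + Module.finrank ℝ ↥(f ⊓ γ) =
        Module.finrank ℝ ↥f + Module.finrank ℝ ↥γ :=
      Submodule.finrank_sup_add_finrank_inf_eq f γ
    rw [hf.1] at h3
    rw [finrank_span_singleton hp0] at h2
    have hpos : 0 < Module.finrank ℝ ↥(f ⊓ γ) := by omega
    have hne : f ⊓ γ ≠ ⊥ := by
      intro h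
      rw [h] at hpos
      simp at hpos
    obtain ⟨z, hz, hz0⟩ := Submodule.exists_mem_ne_zero_of_ne_bot hne
    exact ⟨z, (Submodule.mem_inf.mp hz).2, hz0, (Submodule.mem_inf.mp hz).1⟩
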